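/- Let G be a comonad on a category E with counit ε and comultiplication δ, and X, Y objects of E. Then there exists a morphism GX → Y if and only if for every G-coalgebra (Z, γ : Z → GZ), the existence of a morphism Z → X implies the existence of a morphism Z → Y. -/
import Mathlib


open CategoryTheory

/-- for a comonad `G` on a category `E` and objects `X, Y`, there exists a
morphism `G X → Y` iff for every `G`-coalgebra `(Z, γ)`, the existence of a morphism
`Z → X` implies the existence of a morphism `Z → Y`. -/
theorem comonad_hom_from_cofree_iff_coalgebra_mapping
    {E : Type*} [Category E] (G : Comonad E) (X Y : E) :
    Nonempty (G.obj X ⟶ Y) ↔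
      ∀ Z : Comonad.Coalgebra G, Nonempty (Z.A ⟶ X) → Nonempty (Z.A ⟶ Y) := by
  constructor
  · rintro ⟨f⟩ Z ⟨g⟩
    exact ⟨Z.a ≫ G.map g ≫ f⟩
  · intro h
    exact h ((Comonad.cofree G).obj X) ⟨G.ε.app X⟩
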